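/- WKD-IBE signature verification correctness: if σ = (g₂^α · (g₃ · h_s^m · ∏_{(i,aᵢ)∈fixed(S)} hᵢ^{aᵢ})^r, g^r) for some r ∈ ZMod p, then e(s₀, g) = e(g₁, g₂) · e(g₃ · h_s^m · ∏_{(i,aᵢ)∈fixed(S)} hᵢ^{aᵢ}, s₁), where σ = (s₀, s₁) and g₁ = g^α. -/

import Mathlib

/-- Exponentiation of a group element by an element of `ZMod p`
(well-defined for groups of order `p`). -/
def zpModPow {p : ℕ} {G : Type*} [Monoid G] (x : G) (a : ZMod p) : G :=
  x ^ a.val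

section Pairing

variable {p : ℕ} [Fact (1 < p)]

@[simp]
theorem zpModPow_one {G : Type*} [Monoid G] (x : G) : zpModPow x (1 : ZMod p) = x := by
  simp [zpModPow, ZMod.val_one]

variable {M N P : Type*} [Monoid M] [Monoid N] [Monoid P] (e : M → N → P)

theorem pairing_zpModPow_left
    (hbil : ∀ (a : M) (b : N) (x y : ZMod p),
      e (zpModPow a x) (zpModPow b y) = zpModPow (e a b) (x * y))
    (a : M) (b : N) (x : ZMod p) : e (zpModPow a x) b = zpModPow (e a b) x := by
  simpa using hbil a b x 1

theorem pairing_zpModPow_right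
    (hbil : ∀ (a : M) (b : N) (x y : ZMod p),
      e (zpModPow a x) (zpModPow b y) = zpModPow (e a b) (x * y))
    (a : M) (b : N) (y : ZMod p) : e a (zpModPow b y) = zpModPow (e a b) y := by
  simpa using hbil a b 1 y

end Pairing

theorem wkdibe_verify_correct_general {p : ℕ} (hp : p.Prime)
    {G₁ G₂ GT : Type*} [CommGroup G₁] [CommGroup G₂] [CommGroup GT]
    (e : G₁ → G₂ → GT)
    (hbil : ∀ (a : G₁) (b : G₂) (x y : ZMod p),
      e (zpModPow a x) (zpModPow b y) = zpModPow (e a b) (x * y))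
    (hmulL : ∀ (a a' : G₁) (b : G₂), e (a * a') b = e a b * e a' b)
    (g : G₂) (g₂ : G₁)
    (α : ZMod p) (g₁ : G₂) (hg₁ : g₁ = zpModPow g α)
    (Q : G₁)
    (r : ZMod p) (s₀ : G₁) (s₁ : G₂)
    (hs₀ : s₀ = zpModPow g₂ α * zpModPow Q r)
    (hs₁ : s₁ = zpModPow g r) :
    e s₀ g = e g₂ g₁ * e Q s₁ := by
  have : Fact (1 < p) := ⟨hp.one_lt⟩
  rw [hs₀, hs₁, hg₁, hmulL, pairing_zpModPow_left e hbil, pairing_zpModPow_left e hbil,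
    pairing_zpModPow_right e hbil, pairing_zpModPow_right e hbil]

/-- WKD-IBE signature verification correctness: if
`σ = (g₂^α · (g₃ · h_s^m · ∏_{(i,aᵢ)∈fixed(S)} hᵢ^{aᵢ})^r, g^r)` for some
`r ∈ ZMod p`, then
`e(s₀, g) = e(g₁, g₂) · e(g₃ · h_s^m · ∏_{(i,aᵢ)∈fixed(S)} hᵢ^{aᵢ}, s₁)`,
where `σ = (s₀, s₁)` and `g₁ = g^α`. -/
theorem wkdibe_verify_correct {p : ℕ} (hp : p.Prime)
    {G₁ G₂ GT : Type*} [CommGroup G₁] [CommGroup G₂] [CommGroup GT]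
    (e : G₁ → G₂ → GT)
    (hbil : ∀ (a : G₁) (b : G₂) (x y : ZMod p),
      e (zpModPow a x) (zpModPow b y) = zpModPow (e a b) (x * y))
    (hmulL : ∀ (a a' : G₁) (b : G₂), e (a * a') b = e a b * e a' b)
    (hmulR : ∀ (a : G₁) (b b' : G₂), e a (b * b') = e a b * e a b')
    {ℓ : ℕ} (g : G₂) (g₂ g₃ hs : G₁) (h : Fin ℓ → G₁)
    (α : ZMod p) (g₁ : G₂) (hg₁ : g₁ = zpModPow g α)
    (m : ZMod p) (S : Fin ℓ → Option (ZMod p)) (Q : G₁)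
    (hQ : Q = g₃ * zpModPow hs m *
      ∏ i ∈ Finset.univ.filter (fun i => (S i).isSome), zpModPow (h i) ((S i).getD 0))
    (r : ZMod p) (s₀ : G₁) (s₁ : G₂)
    (hs₀ : s₀ = zpModPow g₂ α * zpModPow Q r)
    (hs₁ : s₁ = zpModPow g r) :
    e s₀ g = e g₂ g₁ * e Q s₁ :=
  wkdibe_verify_correct_general hp e hbil hmulL g g₂ α g₁ hg₁ Q r s₀ s₁ hs₀ hs₁
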